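/- arXiv:1902.10129 — 4 statements merged into one kernel-verified Lean document; each statement's English description precedes it below -/
import Mathlib

section
/- Let μ ∈ ℂ with |μ| > 1 and write μ = -e^{ix} for some x ∈ ℂ. Then the series ∑_{n=2}^∞ |e^{-ix} U_{n-1}(cos x) - U_{n-2}(cos x)|² equals ∑_{n=2}^∞ |μ|^{-2n} and is finite. Conversely if |μ| ≤ 1 the series diverges. -/
open Complex

/-- Chebyshev polynomials of the second kind (as complex functions). -/
noncomputable def chebU : ℕ → ℂ → ℂ
  | 0, _ => 1
  | 1, x => 2 * x
  | (n + 2), x => 2 * x * chebU (n + 1) x - chebU n x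

/-! With `w = e^{ix}` one has `cos x = (w + w⁻¹)/2`, and the Chebyshev recurrence turns
`w⁻¹ U_{n+1} - U_n` into the pure power `w^{-(n+2)}`. The terms of the series are therefore
`|μ|^{-2(n+2)}`, a shifted geometric series with ratio `|μ|^{-2}`. -/

theorem inv_mul_chebU_succ_sub_chebU {w : ℂ} (hw : w ≠ 0) (n : ℕ) :
    w⁻¹ * chebU (n + 1) ((w + w⁻¹) / 2) - chebU n ((w + w⁻¹) / 2) = w⁻¹ ^ (n + 2) := by
  have hmul : w * w⁻¹ = 1 := mul_inv_cancel₀ hw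
  induction n using Nat.twoStepInduction with
  | zero => simp only [chebU]; linear_combination hmul
  | one => simp only [chebU]; linear_combination (w + 2 * w⁻¹) * hmul
  | more n ih₁ ih₂ =>
    simp only [chebU] at ih₂ ⊢
    linear_combination (w + w⁻¹) * ih₂ - ih₁ + w⁻¹ ^ (n + 2) * hmul

theorem cos_eq_exp_add_inv (x : ℂ) :
    Complex.cos x = (Complex.exp (I * x) + (Complex.exp (I * x))⁻¹) / 2 := by
  rw [Complex.cos, ← Complex.exp_neg]
  ring_nf

theorem exp_neg_mul_chebU_succ_sub_chebU (x : ℂ) (n : ℕ) :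
    Complex.exp (-I * x) * chebU (n + 1) (Complex.cos x) - chebU n (Complex.cos x)
      = (Complex.exp (I * x))⁻¹ ^ (n + 2) := by
  rw [cos_eq_exp_add_inv, neg_mul, Complex.exp_neg]
  exact inv_mul_chebU_succ_sub_chebU (Complex.exp_ne_zero _) n

theorem summable_pow_add_iff {r : ℝ} (hr : 0 ≤ r) (k : ℕ) :
    (Summable fun n : ℕ => r ^ (n + k)) ↔ r < 1 := by
  rw [summable_nat_add_iff (f := fun n => r ^ n) k, summable_geometric_iff_norm_lt_one,
    Real.norm_of_nonneg hr]

theorem inv_sq_lt_one_iff {a : ℝ} (ha : 0 < a) : (a⁻¹) ^ 2 < 1 ↔ 1 < a := by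
  rw [pow_lt_one_iff_of_nonneg (inv_nonneg.mpr ha.le) two_ne_zero, inv_lt_one₀ ha]

/-- The series `∑_{n=2}^∞ |e^{-ix} U_{n-1}(cos x) - U_{n-2}(cos x)|²` equals
`∑_{n=2}^∞ |μ|^{-2n}` and converges iff `|μ| > 1`, where `μ = -e^{ix}`. -/
theorem cheb_series_summable_iff (μ x : ℂ) (hμx : μ = -Complex.exp (I * x)) :
    (∑' n : ℕ, ‖Complex.exp (-I * x) * chebU (n + 1) (Complex.cos x)
        - chebU n (Complex.cos x)‖ ^ 2)
      = (∑' n : ℕ, ‖μ‖ ^ (-(2 * ((n : ℤ) + 2)))) ∧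
    ((1 < ‖μ‖ → Summable (fun n : ℕ =>
        ‖Complex.exp (-I * x) * chebU (n + 1) (Complex.cos x)
          - chebU n (Complex.cos x)‖ ^ 2)) ∧
     (‖μ‖ ≤ 1 → ¬ Summable (fun n : ℕ =>
        ‖Complex.exp (-I * x) * chebU (n + 1) (Complex.cos x)
          - chebU n (Complex.cos x)‖ ^ 2))) := by
  have hμ_pos : 0 < ‖μ‖ := by
    rw [hμx, norm_neg, norm_pos_iff]
    exact Complex.exp_ne_zero _
  have hterm (n : ℕ) : ‖Complex.exp (-I * x) * chebU (n + 1) (Complex.cos x)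
      - chebU n (Complex.cos x)‖ ^ 2 = ((‖μ‖⁻¹) ^ 2) ^ (n + 2) := by
    rw [exp_neg_mul_chebU_succ_sub_chebU, norm_pow, norm_inv, hμx, norm_neg, ← pow_mul,
      ← pow_mul, mul_comm (n + 2)]
  have hzpow (n : ℕ) : ‖μ‖ ^ (-(2 * ((n : ℤ) + 2))) = ((‖μ‖⁻¹) ^ 2) ^ (n + 2) := by
    rw [← pow_mul, inv_pow, ← zpow_natCast, ← zpow_neg]
    push_cast
    ring_nf
  have hsummable := summable_pow_add_iff (sq_nonneg ‖μ‖⁻¹) 2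
  rw [inv_sq_lt_one_iff hμ_pos] at hsummable
  simp only [hterm, hzpow, true_and]
  exact ⟨hsummable.mpr, fun h => mt hsummable.mp h.not_gt⟩
end

section
/- Let μ ∈ ℝ with |μ| ≤ 1, μ ≠ 0. Then the operator J₁*(μ) on ℓ²(ℕ) (diagonal (-μ,0,0,…), off-diagonals 1) has no eigenvalue outside [-2,2]: if z₀ ∉ [-2,2] and J₁*(μ)u = z₀ u with u ∈ ℓ²(ℕ), then u = 0. -/
/-!
Write `z₀ = v + v⁻¹` with `|v| > 1`. For every solution of the recurrence,
`u (n + 1) - v⁻¹ u n = vⁿ (u 1 - v⁻¹ u 0)`; since `u ∈ ℓ²` tends to `0`, this forces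
`u 1 = v⁻¹ u 0`. The boundary condition then becomes `(μ + v) u 0 = 0`, and `|μ| ≤ 1 < |v|`
gives `u 0 = 0`, hence `u = 0`.
-/

open Filter Topology

theorem Memℓp.tendsto_norm_cofinite_zero {α : Type*} {E : α → Type*}
    [∀ i, NormedAddCommGroup (E i)] {p : ENNReal} {f : ∀ i, E i} (hf : Memℓp f p)
    (hp : 0 < p.toReal) : Tendsto (fun i ↦ ‖f i‖) cofinite (𝓝 0) := by
  have hpow : Tendsto (fun i ↦ ‖f i‖ ^ p.toReal) cofinite (𝓝 0) :=
    (hf.summable hp).tendsto_cofinite_zero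
  have hroot := (Real.continuousAt_rpow_const 0 p.toReal⁻¹
    (.inr (inv_nonneg.2 hp.le))).tendsto.comp hpow
  rw [Real.zero_rpow (inv_ne_zero hp.ne')] at hroot
  exact hroot.congr fun i ↦ Real.rpow_rpow_inv (norm_nonneg _) hp.ne'

theorem exists_one_lt_add_inv_eq {z : ℝ} (hz : 2 < z) :
    ∃ v : ℝ, 1 < v ∧ v + v⁻¹ = z := by
  set s := √(z ^ 2 - 4)
  have hs : 0 < s := Real.sqrt_pos.2 (by nlinarith)
  have hs2 : s ^ 2 = z ^ 2 - 4 := Real.sq_sqrt (by nlinarith)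
  have hinv : ((z + s) / 2)⁻¹ = (z - s) / 2 :=
    inv_eq_of_mul_eq_one_right (by linear_combination -hs2 / 4)
  exact ⟨(z + s) / 2, by linarith, by rw [hinv]; ring⟩

theorem exists_one_lt_abs_add_inv_eq {z : ℝ} (hz : 2 < |z|) :
    ∃ v : ℝ, 1 < |v| ∧ v + v⁻¹ = z := by
  rcases lt_abs.1 hz with hz | hz
  · obtain ⟨v, hv, hvz⟩ := exists_one_lt_add_inv_eq hz
    exact ⟨v, by rwa [abs_of_pos (by linarith)], hvz⟩
  · obtain ⟨v, hv, hvz⟩ := exists_one_lt_add_inv_eq hz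
    exact ⟨-v, by rwa [abs_neg, abs_of_pos (by linarith)], by rw [inv_neg]; linarith⟩

-- The characteristic polynomial factors as `X² - (w + v) X + 1 = (X - w) (X - v)`.
theorem sub_mul_eq_pow_mul_of_recurrence {R : Type*} [CommRing R] {u : ℕ → R} {v w : R}
    (hvw : v * w = 1) (hrec : ∀ n, u n + u (n + 2) = (w + v) * u (n + 1)) (n : ℕ) :
    u (n + 1) - w * u n = v ^ n * (u 1 - w * u 0) := by
  induction n with
  | zero => simp
  | succ n ih =>
    rw [pow_succ', mul_assoc, ← ih]
    linear_combination hrec n + u n * hvw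

theorem eq_zero_of_tendsto_mul_pow {𝕜 : Type*} [NormedDivisionRing 𝕜] {c v : 𝕜}
    (hv : 1 ≤ ‖v‖) (h : Tendsto (fun n : ℕ ↦ c * v ^ n) atTop (𝓝 0)) : c = 0 := by
  by_contra hc
  have hpow : Tendsto (fun n : ℕ ↦ v ^ n) atTop (𝓝 0) := by
    simpa [inv_mul_cancel_left₀ hc] using h.const_mul c⁻¹
  exact (tendsto_pow_atTop_nhds_zero_iff_norm_lt_one.1 hpow).not_ge hv

theorem no_eigenvalue_outside_general (μ : ℝ) (hμ : |μ| ≤ 1)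
    (z₀ : ℝ) (hz : z₀ ∉ Set.Icc (-2 : ℝ) 2) (u : ℕ → ℝ) (hu : Memℓp u 2)
    (h0 : -μ * u 0 + u 1 = z₀ * u 0)
    (hrec : ∀ n : ℕ, u n + u (n + 2) = z₀ * u (n + 1)) :
    u = 0 := by
  have hz2 : 2 < |z₀| := by
    rw [Set.mem_Icc, not_and_or, not_le, not_le] at hz
    exact lt_abs.2 (hz.symm.imp id fun h ↦ by linarith)
  obtain ⟨v, hv, rfl⟩ := exists_one_lt_abs_add_inv_eq hz2
  have hv0 : v ≠ 0 := by rintro rfl; norm_num at hv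
  have hdiff := sub_mul_eq_pow_mul_of_recurrence (u := u) (mul_inv_cancel₀ hv0)
    (fun n ↦ by rw [add_comm v⁻¹]; exact hrec n)
  have hu_tendsto : Tendsto u atTop (𝓝 0) := by
    rw [tendsto_zero_iff_norm_tendsto_zero, ← Nat.cofinite_eq_atTop]
    exact hu.tendsto_norm_cofinite_zero (by norm_num)
  have hstart : u 1 - v⁻¹ * u 0 = 0 := by
    refine eq_zero_of_tendsto_mul_pow (c := u 1 - v⁻¹ * u 0) hv.le ?_
    simp_rw [mul_comm _ (v ^ _), ← hdiff]
    have hshift := (tendsto_add_atTop_iff_nat 1).2 hu_tendsto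
    simpa using hshift.sub (hu_tendsto.const_mul v⁻¹)
  have hu0 : u 0 = 0 := by
    have hμv : μ + v ≠ 0 := fun h ↦ by
      rw [eq_neg_of_add_eq_zero_left h, abs_neg] at hμ; linarith
    have hbdry : (μ + v) * u 0 = 0 := by linear_combination -h0 + hstart
    exact (mul_eq_zero.1 hbdry).resolve_left hμv
  funext n
  induction n with
  | zero => exact hu0
  | succ n ih => simpa [ih, hstart] using hdiff n

theorem no_eigenvalue_outside (μ : ℝ) (hμ : |μ| ≤ 1) (hμ0 : μ ≠ 0)
    (z₀ : ℝ) (hz : z₀ ∉ Set.Icc (-2 : ℝ) 2) (u : ℕ → ℝ) (hu : Memℓp u 2)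
    (h0 : -μ * u 0 + u 1 = z₀ * u 0)
    (hrec : ∀ n : ℕ, u n + u (n + 2) = z₀ * u (n + 1)) :
    u = 0 :=
  no_eigenvalue_outside_general μ hμ z₀ hz u hu h0 hrec
end

section
/- The set B₁ = { -sin((n+1)t)/sin(nt) : t = (p/q)π with p, q, n ∈ ℕ, 0 < p < q, sin(nt) ≠ 0 } is dense in ℝ. -/
/-- The set `B₁` of numbers `-sin((n+1)t)/sin(nt)` for `t = (p/q)π` a rational
multiple of `π` in `(0,π)` and `n ≥ 1` with `sin(nt) ≠ 0`. -/
def B1 : Set ℝ :=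
  {r : ℝ | ∃ p q n : ℕ, 0 < p ∧ p < q ∧ 1 ≤ n ∧
    Real.sin (n * ((p / q) * Real.pi)) ≠ 0 ∧
    r = -Real.sin ((n + 1) * ((p / q) * Real.pi)) /
        Real.sin (n * ((p / q) * Real.pi))}

/-!
Every rational `r ≠ -1` can be written `r = (p - b) / b` with `p > 0` and `b ≠ 0` integers.
For `q = M p + b` and `t = p π / q` we get `M t = π - b u` and `(M + 1) t = π + (p - b) u`
with `u = π / q`, so the element of `B₁` given by `(p, q, M)` is `sin ((p - b) u) / sin (b u)`.
As `M → ∞`, `u → 0` and this ratio tends to `(p - b) / b = r`.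
-/

open Real Filter Topology

lemma sin_eq_mul_sinc (x : ℝ) : sin x = x * sinc x := by
  rcases eq_or_ne x 0 with rfl | hx
  · simp
  · rw [sinc_of_ne_zero hx, mul_div_cancel₀ _ hx]

lemma eventually_sin_mul_ne_zero {b : ℝ} (hb : b ≠ 0) :
    ∀ᶠ u in 𝓝[≠] (0 : ℝ), sin (b * u) ≠ 0 := by
  have hsinc : ∀ᶠ u in 𝓝 (0 : ℝ), sinc (b * u) ≠ 0 :=
    (continuous_sinc.comp (continuous_const_mul b)).continuousAt.eventually_ne (by simp)
  filter_upwards [nhdsWithin_le_nhds hsinc, self_mem_nhdsWithin] with u hu hu0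
  rw [sin_eq_mul_sinc]
  exact mul_ne_zero (mul_ne_zero hb hu0) hu

lemma tendsto_sin_mul_div_sin_mul (c : ℝ) {b : ℝ} (hb : b ≠ 0) :
    Tendsto (fun u => sin (c * u) / sin (b * u)) (𝓝[≠] 0) (𝓝 (c / b)) := by
  have hcont : ContinuousAt (fun u => c * sinc (c * u) / (b * sinc (b * u))) 0 :=
    ContinuousAt.div (by fun_prop) (by fun_prop) (by simpa using hb)
  have hlim := hcont.tendsto
  simp only [mul_zero, sinc_zero, mul_one] at hlim
  refine (tendsto_nhdsWithin_of_tendsto_nhds hlim).congr' ?_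
  filter_upwards [self_mem_nhdsWithin] with u (hu : u ≠ 0)
  rw [sin_eq_mul_sinc (c * u), sin_eq_mul_sinc (b * u), mul_right_comm c, mul_right_comm b,
    mul_div_mul_right _ _ hu]

lemma sin_sub_mul_div_sin_mul_mem_B1 {p q n : ℕ} {b : ℝ} (hp : 0 < p) (hpq : p < q) (hn : 1 ≤ n)
    (hq : (q : ℝ) = n * p + b) (hb : sin (b * (π / q)) ≠ 0) :
    sin ((p - b) * (π / q)) / sin (b * (π / q)) ∈ B1 := by
  have hq0 : (q : ℝ) ≠ 0 := Nat.cast_ne_zero.mpr (by omega)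
  have hn_mul : n * ((p / q) * π) = π - b * (π / q) := by
    field_simp
    linear_combination -hq
  have hsucc_mul : (n + 1) * ((p / q) * π) = (p - b) * (π / q) + π := by
    field_simp
    linear_combination -hq
  refine ⟨p, q, n, hp, hpq, hn, ?_, ?_⟩
  · rwa [hn_mul, sin_pi_sub]
  · rw [hn_mul, hsucc_mul, sin_pi_sub, sin_add_pi, neg_neg]

lemma tendsto_pi_div_mul_add {p : ℕ} (hp : 0 < p) (b : ℝ) :
    Tendsto (fun M : ℕ => π / (M * p + b)) atTop (𝓝[≠] 0) := by
  have hden : Tendsto (fun M : ℕ => (M : ℝ) * p + b) atTop atTop :=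
    tendsto_atTop_add_const_right _ b
      (tendsto_natCast_atTop_atTop.atTop_mul_const (by exact_mod_cast hp))
  refine tendsto_nhdsWithin_iff.mpr ⟨tendsto_const_nhds.div_atTop hden, ?_⟩
  filter_upwards [hden.eventually_gt_atTop 0] with M hM
  exact (div_pos pi_pos hM).ne'

lemma sub_div_mem_closure_B1 {p : ℕ} (hp : 0 < p) {b : ℤ} (hb : b ≠ 0) :
    ((p - b) / b : ℝ) ∈ closure B1 := by
  have hb' : (b : ℝ) ≠ 0 := by exact_mod_cast hb
  have hu := tendsto_pi_div_mul_add hp b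
  refine mem_closure_of_tendsto ((tendsto_sin_mul_div_sin_mul _ hb').comp hu) ?_
  filter_upwards [hu.eventually (eventually_sin_mul_ne_zero hb'),
    eventually_ge_atTop (b.natAbs + 2)] with M hsin hM
  have hMp : ((|b| + 2) * p : ℤ) ≤ M * p := by
    rw [← Int.natCast_natAbs]
    exact_mod_cast Nat.mul_le_mul_right p hM
  have hp1 : (1 : ℤ) ≤ p := by exact_mod_cast hp
  have hpb : (p : ℤ) < M * p + b := by
    nlinarith [neg_abs_le b, mul_le_mul_of_nonneg_left hp1 (abs_nonneg b)]
  obtain ⟨q, hq⟩ : ∃ q : ℕ, (q : ℤ) = M * p + b := ⟨_, Int.toNat_of_nonneg (by omega)⟩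
  have hqR : (q : ℝ) = M * p + b := by exact_mod_cast hq
  have hpq : p < q := by omega
  simp only [Function.comp_apply, ← hqR] at hsin ⊢
  exact sin_sub_mul_div_sin_mul_mem_B1 hp hpq (by omega) hqR hsin

theorem B1_dense : Dense B1 := by
  rw [← dense_closure]
  refine (Rat.denseRange_cast.sdiff_singleton (-1 : ℝ)).mono ?_
  rintro _ ⟨⟨r, rfl⟩, hr⟩
  set w : ℚ := (r + 1)⁻¹
  have hw : w ≠ 0 := inv_ne_zero fun h => hr (by simp [eq_neg_of_add_eq_zero_left h])
  have hr_eq : r = (w.den - w.num) / w.num := by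
    have hnum : (w.num : ℚ) ≠ 0 := by exact_mod_cast Rat.num_ne_zero.mpr hw
    rw [sub_div, div_self hnum, ← inv_div, Rat.num_div_den, inv_inv]
    ring
  rw [hr_eq]
  push_cast
  exact sub_div_mem_closure_B1 w.den_pos (Rat.num_ne_zero.mpr hw)
end

section
/- Let μ > 1 and let x_n* denote the zero of P_{n,μ} closest to -μ/2 - 1/μ (which exists and is unique for large n). Then |x_n* + μ/2 + 1/μ|^{1/n} → μ^{-2} as n → ∞. -/
/-!
Writing `z = μ/2 - (t + t⁻¹)`, the recurrence is solved by `(-t)ⁿ` and `(-t⁻¹)ⁿ`, which gives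
`tⁿ (t² - 1) P_n(z) = ±((μ - t) t^(2n+1) + 1 - μt)`. Hence the zeros of `P_n` to the left of
`μ/2 - 2` are the points `z(t)` with `t > 1` a root of `secular μ n`. This function vanishes at
`1` and is strictly concave on `[1, ∞)` once `n(μ - 1) ≥ 1`, so it has at most one root `τ > 1`;
since `secular μ n c → μ - c > 0`, that root exists and lies in `(c, μ)` for every `c < μ` and
large `n`, so `τ → μ`. The eigenvalue is `z(μ)`, and
`z(τ) - z(μ) = (μτ - 1)² / μ · τ^(-(2n+2))`, whose `n`-th root tends to `μ⁻²`.
-/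

open Filter Topology

/-- The monic orthogonal polynomials `P_{n,μ}`: `P_0 = 1`, `P_1(z) = z + μ/2`,
`P_{n+1}(z) = (z - μ/2)P_n(z) - P_{n-1}(z)`. -/
noncomputable def Ppoly (μ : ℝ) : ℕ → ℝ → ℝ
  | 0, _ => 1
  | 1, z => z + μ / 2
  | (n + 2), z => (z - μ / 2) * Ppoly μ (n + 1) z - Ppoly μ n z

open Set

theorem exists_one_lt_add_inv_eq_s19 {s : ℝ} (hs : 2 < s) : ∃ t, 1 < t ∧ t + t⁻¹ = s := by
  have hcont : ContinuousOn (fun t : ℝ => t + t⁻¹) (Icc 1 s) :=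
    continuousOn_id.add (continuousOn_inv₀.mono fun t ht => by
      simp only [mem_Icc] at ht; exact (zero_lt_one.trans_le ht.1).ne')
  have hs' : s ∈ Ioo (1 + 1⁻¹) (s + s⁻¹) :=
    ⟨by norm_num [hs], lt_add_of_pos_right s (by positivity)⟩
  obtain ⟨t, ht, hts⟩ := intermediate_value_Ioo (by linarith) hcont hs'
  exact ⟨t, ht.1, hts⟩

theorem Ppoly_param_mul (μ : ℝ) {t : ℝ} (ht : t ≠ 0) (n : ℕ) :
    Ppoly μ n (μ / 2 - (t + t⁻¹)) * (t ^ n * (t ^ 2 - 1)) =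
      (-1) ^ (n + 1) * ((μ - t) * t ^ (2 * n + 1) + 1 - μ * t) := by
  induction n using Nat.twoStepInduction with
  | zero => simp only [Ppoly]; ring
  | one => simp only [Ppoly]; field_simp; ring
  | more n ih₀ ih₁ =>
    have hrec : Ppoly μ (n + 2) (μ / 2 - (t + t⁻¹)) * (t ^ (n + 2) * (t ^ 2 - 1)) =
        -(t ^ 2 + 1) * (Ppoly μ (n + 1) (μ / 2 - (t + t⁻¹)) * (t ^ (n + 1) * (t ^ 2 - 1)))
          - t ^ 2 * (Ppoly μ n (μ / 2 - (t + t⁻¹)) * (t ^ n * (t ^ 2 - 1))) := by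
      simp only [Ppoly]; field_simp; ring
    rw [hrec, ih₀, ih₁]
    ring

noncomputable def secular (μ : ℝ) (n : ℕ) (t : ℝ) : ℝ :=
  μ - t + t ^ (-(2 * n + 1 : ℤ)) - μ * t ^ (-(2 * n : ℤ))

theorem pow_mul_secular (μ : ℝ) (n : ℕ) {t : ℝ} (ht : t ≠ 0) :
    t ^ (2 * n + 1) * secular μ n t = (μ - t) * t ^ (2 * n + 1) + 1 - μ * t := by
  simp only [secular, zpow_neg]
  norm_cast
  field_simp
  ring

theorem Ppoly_param_eq_zero_iff (μ : ℝ) {t : ℝ} (ht : 1 < t) (n : ℕ) :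
    Ppoly μ n (μ / 2 - (t + t⁻¹)) = 0 ↔ secular μ n t = 0 := by
  have h := Ppoly_param_mul μ (by positivity : t ≠ 0) n
  have h₁ : t ^ n * (t ^ 2 - 1) ≠ 0 := by
    have : 1 < t ^ 2 := by nlinarith
    exact mul_ne_zero (by positivity) (by linarith)
  have h₂ : (-1 : ℝ) ^ (n + 1) * t ^ (2 * n + 1) ≠ 0 := by positivity
  rw [← pow_mul_secular μ n (by positivity), ← mul_assoc (_ ^ (n + 1))] at h
  rw [← mul_eq_zero_iff_right h₁, h, mul_eq_zero_iff_left h₂]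

theorem hasDerivAt_secular (μ : ℝ) (n : ℕ) {t : ℝ} (ht : t ≠ 0) :
    HasDerivAt (secular μ n)
      (-1 - (2 * n + 1) * t ^ (-(2 * n + 2 : ℤ)) + 2 * n * μ * t ^ (-(2 * n + 1 : ℤ))) t := by
  have h₁ := hasDerivAt_zpow (-(2 * n + 1 : ℤ)) t (.inl ht)
  have h₂ := hasDerivAt_zpow (-(2 * n : ℤ)) t (.inl ht)
  have e₁ : t ^ (-(2 * n + 1 : ℤ) - 1) = t ^ (-(2 * n + 2 : ℤ)) := by ring_nf
  have e₂ : t ^ (-(2 * n : ℤ) - 1) = t ^ (-(2 * n + 1 : ℤ)) := by ring_nf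
  refine ((((hasDerivAt_id t).const_sub μ).add h₁).sub (h₂.const_mul μ)).congr_deriv ?_
  rw [e₁, e₂]
  push_cast
  ring

theorem hasDerivAt_secular_deriv (μ : ℝ) (n : ℕ) {t : ℝ} (ht : t ≠ 0) :
    HasDerivAt
      (fun t => -1 - (2 * n + 1) * t ^ (-(2 * n + 2 : ℤ)) + 2 * n * μ * t ^ (-(2 * n + 1 : ℤ)))
      ((2 * n + 1) * t ^ (-(2 * n + 3 : ℤ)) * (2 * n + 2 - 2 * n * μ * t)) t := by
  have h₁ := hasDerivAt_zpow (-(2 * n + 2 : ℤ)) t (.inl ht)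
  have h₂ := hasDerivAt_zpow (-(2 * n + 1 : ℤ)) t (.inl ht)
  have e₁ : t ^ (-(2 * n + 2 : ℤ) - 1) = t ^ (-(2 * n + 3 : ℤ)) := by ring_nf
  have e₂ : t ^ (-(2 * n + 1 : ℤ) - 1) = t ^ (-(2 * n + 3 : ℤ)) * t := by
    rw [← zpow_add_one₀ ht]; ring_nf
  refine (((h₁.const_mul (2 * n + 1 : ℝ)).const_sub (-1)).add
    (h₂.const_mul (2 * n * μ))).congr_deriv ?_
  rw [e₁, e₂]
  push_cast
  ring

theorem StrictConcaveOn.eq_of_apply_eq {s : Set ℝ} {f : ℝ → ℝ} (hf : StrictConcaveOn ℝ s f)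
    {a x y : ℝ} (ha : a ∈ s) (hx : x ∈ s) (hy : y ∈ s) (hax : a < x) (hay : a < y)
    (hfx : f x = f a) (hfy : f y = f a) : x = y := by
  wlog hxy : x < y generalizing x y
  · rcases (not_lt.1 hxy).eq_or_lt with h | h
    · exact h.symm
    · exact (this hy hx hay hax hfy hfx h).symm
  have := hf.lt_on_openSegment ha hy hay.ne (by rw [openSegment_eq_Ioo hay]; exact ⟨hax, hxy⟩)
  rw [hfx, hfy, min_self] at this
  exact absurd this (lt_irrefl _)

theorem strictConcaveOn_secular {μ : ℝ} {n : ℕ} (hn : 1 ≤ n * (μ - 1)) :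
    StrictConcaveOn ℝ (Ici 1) (secular μ n) := by
  have hne {t : ℝ} (ht : t ∈ Ici 1) : t ≠ 0 := by simp only [mem_Ici] at ht; positivity
  refine StrictAntiOn.strictConcaveOn_of_deriv (convex_Ici 1)
    (fun t ht => (hasDerivAt_secular μ n (hne ht)).continuousAt.continuousWithinAt) ?_
  rw [interior_Ici]
  have hanti : StrictAntiOn
      (fun t => -1 - (2 * n + 1) * t ^ (-(2 * n + 2 : ℤ)) + 2 * n * μ * t ^ (-(2 * n + 1 : ℤ)))
      (Ioi 1) := by
    refine strictAntiOn_of_deriv_neg (convex_Ioi 1) (fun t ht =>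
      (hasDerivAt_secular_deriv μ n (hne (mem_Ici_of_Ioi ht))).continuousAt.continuousWithinAt) ?_
    intro t ht
    rw [interior_Ioi] at ht
    rw [(hasDerivAt_secular_deriv μ n (hne (mem_Ici_of_Ioi ht))).deriv]
    have ht₁ : 1 < t := ht
    have : 2 * n + 2 < 2 * n * μ * t := by nlinarith
    have : 0 < t := by linarith
    exact mul_neg_of_pos_of_neg (by positivity) (by linarith)
  exact hanti.congr fun t ht => ((hasDerivAt_secular μ n (hne (mem_Ici_of_Ioi ht))).deriv).symm

theorem secular_one (μ : ℝ) (n : ℕ) : secular μ n 1 = 0 := by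
  simp [secular]

theorem eq_of_secular_eq_zero {μ : ℝ} {n : ℕ} (hn : 1 ≤ n * (μ - 1)) {s t : ℝ} (hs : 1 < s)
    (ht : 1 < t) (hs₀ : secular μ n s = 0) (ht₀ : secular μ n t = 0) : s = t :=
  (strictConcaveOn_secular hn).eq_of_apply_eq self_mem_Ici hs.le ht.le hs ht
    (by rw [hs₀, secular_one]) (by rw [ht₀, secular_one])

theorem secular_self_neg {μ : ℝ} (hμ : 1 < μ) (n : ℕ) : secular μ n μ < 0 := by
  have h := pow_mul_secular μ n (by positivity : μ ≠ 0)
  have : 0 < μ ^ (2 * n + 1) := by positivity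
  nlinarith

theorem eventually_secular_pos {μ c : ℝ} (hc : 1 < c) (hcμ : c < μ) :
    ∀ᶠ n in atTop, 0 < secular μ n c := by
  filter_upwards [(tendsto_pow_atTop_atTop_of_one_lt hc).eventually_gt_atTop
    ((μ * c - 1) / (μ - c))] with n hn
  have hpow : (μ * c - 1) / (μ - c) < c ^ (2 * n + 1) :=
    hn.trans_le (pow_le_pow_right₀ hc.le (by omega))
  rw [div_lt_iff₀ (by linarith)] at hpow
  have h := pow_mul_secular μ n (by positivity : c ≠ 0)
  have : 0 < c ^ (2 * n + 1) := by positivity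
  nlinarith

/-- Junk value when `secular μ n` has no root in `(1, ∞)`. -/
noncomputable def secularRoot (μ : ℝ) (n : ℕ) : ℝ :=
  Classical.epsilon fun t => 1 < t ∧ secular μ n t = 0

theorem secularRoot_spec {μ c : ℝ} {n : ℕ} (hn : 1 ≤ n * (μ - 1)) (hc : 1 < c) (hcμ : c < μ)
    (hpos : 0 < secular μ n c) :
    c < secularRoot μ n ∧ secularRoot μ n < μ ∧ secular μ n (secularRoot μ n) = 0 ∧
      ∀ t, 1 < t → secular μ n t = 0 → t = secularRoot μ n := by
  have hcont : ContinuousOn (secular μ n) (Icc c μ) := fun t ht =>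
    have ht₀ : t ≠ 0 := by simp only [mem_Icc] at ht; linarith
    (hasDerivAt_secular μ n ht₀).continuousAt.continuousWithinAt
  obtain ⟨t, ⟨hct, htμ⟩, ht₀⟩ :=
    intermediate_value_Ioo' hcμ.le hcont
      (show (0 : ℝ) ∈ Ioo _ _ from ⟨secular_self_neg (hc.trans hcμ) n, hpos⟩)
  obtain ⟨hτ, hτ₀⟩ : 1 < secularRoot μ n ∧ secular μ n (secularRoot μ n) = 0 :=
    Classical.epsilon_spec (p := fun t => 1 < t ∧ secular μ n t = 0) ⟨t, hc.trans hct, ht₀⟩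
  have huniq t' (ht' : 1 < t') (ht'₀ : secular μ n t' = 0) : t' = secularRoot μ n :=
    eq_of_secular_eq_zero hn ht' hτ ht'₀ hτ₀
  obtain rfl := huniq t (hc.trans hct) ht₀
  exact ⟨hct, htμ, ht₀, huniq⟩

theorem eventually_secularRoot_spec {μ c : ℝ} (hc : 1 < c) (hcμ : c < μ) :
    ∀ᶠ n in atTop, c < secularRoot μ n ∧ secularRoot μ n < μ ∧
      secular μ n (secularRoot μ n) = 0 ∧ ∀ t, 1 < t → secular μ n t = 0 → t = secularRoot μ n := by
  have hn : ∀ᶠ n : ℕ in atTop, 1 ≤ n * (μ - 1) :=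
    (tendsto_natCast_atTop_atTop.atTop_mul_const (by linarith)).eventually_ge_atTop 1
  filter_upwards [hn, eventually_secular_pos hc hcμ] with n hn hpos
  exact secularRoot_spec hn hc hcμ hpos

theorem tendsto_secularRoot {μ : ℝ} (hμ : 1 < μ) : Tendsto (secularRoot μ) atTop (𝓝 μ) := by
  refine tendsto_order.2 ⟨fun a ha => ?_, fun b hb => ?_⟩
  · have hc : 1 < max a ((1 + μ) / 2) := lt_max_of_lt_right (by linarith)
    filter_upwards [eventually_secularRoot_spec hc (max_lt ha (by linarith))] with n hn
    exact (le_max_left _ _).trans_lt hn.1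
  · filter_upwards [eventually_secularRoot_spec (μ := μ) (c := (1 + μ) / 2) (by linarith)
      (by linarith)] with n hn
    exact hn.2.1.trans hb

theorem param_sub_eigenvalue_of_secular_eq_zero {μ t : ℝ} {n : ℕ} (hμ : 0 < μ) (ht : 0 < t)
    (h : secular μ n t = 0) :
    μ / 2 - (t + t⁻¹) - (-μ / 2 - 1 / μ) = (μ * t - 1) ^ 2 / μ * (t⁻¹ ^ 2) ^ (n + 1) := by
  have hG := pow_mul_secular μ n ht.ne'
  rw [h, mul_zero] at hG
  rw [← pow_mul, inv_pow]
  field_simp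
  linear_combination -2 * t * (μ * t - 1) * hG

theorem tendsto_mul_pow_succ_rpow_one_div {a b : ℕ → ℝ} {α β : ℝ} (ha : Tendsto a atTop (𝓝 α))
    (hα : 0 < α) (hb : Tendsto b atTop (𝓝 β)) (ha₀ : ∀ n, 0 ≤ a n) (hb₀ : ∀ n, 0 ≤ b n) :
    Tendsto (fun n : ℕ => (a n * b n ^ (n + 1)) ^ (1 / (n : ℝ))) atTop (𝓝 β) := by
  have hinv : Tendsto (fun n : ℕ => 1 / (n : ℝ)) atTop (𝓝 0) := tendsto_one_div_atTop_nhds_zero_nat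
  have h := (ha.rpow hinv (.inl hα.ne')).mul
    (hb.rpow ((tendsto_const_nhds (x := (1 : ℝ))).add hinv) (.inr (by norm_num)))
  rw [add_zero, Real.rpow_zero, Real.rpow_one, one_mul] at h
  refine h.congr' ?_
  filter_upwards [eventually_ne_atTop 0] with n hn
  rw [Real.mul_rpow (ha₀ n) (pow_nonneg (hb₀ n) _), ← Real.rpow_natCast, ← Real.rpow_mul (hb₀ n)]
  congr 2
  field_simp
  push_cast
  ring

theorem eq_of_Ppoly_eq_zero_of_lt {μ y τ : ℝ} {n : ℕ} (hy : y < μ / 2 - 2)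
    (hP : Ppoly μ n y = 0) (huniq : ∀ t, 1 < t → secular μ n t = 0 → t = τ) :
    y = μ / 2 - (τ + τ⁻¹) := by
  obtain ⟨t, ht, hts⟩ := exists_one_lt_add_inv_eq_s19 (s := μ / 2 - y) (by linarith)
  have hy' : y = μ / 2 - (t + t⁻¹) := by rw [hts]; ring
  rw [hy', Ppoly_param_eq_zero_iff μ ht] at hP
  rw [hy', huniq t ht hP]

theorem Ppoly_param_closest_zero {μ τ e : ℝ} {n : ℕ} (hτ : 1 < τ) (hτ₀ : secular μ n τ = 0)
    (huniq : ∀ t, 1 < t → secular μ n t = 0 → t = τ)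
    (hclose : |μ / 2 - (τ + τ⁻¹) - e| < μ / 2 - 2 - e) :
    Ppoly μ n (μ / 2 - (τ + τ⁻¹)) = 0 ∧
      (∀ y, Ppoly μ n y = 0 → |μ / 2 - (τ + τ⁻¹) - e| ≤ |y - e|) ∧
      (∀ y, Ppoly μ n y = 0 → |y - e| ≤ |μ / 2 - (τ + τ⁻¹) - e| → y = μ / 2 - (τ + τ⁻¹)) := by
  have hfar y (hy : Ppoly μ n y = 0) (hne : y ≠ μ / 2 - (τ + τ⁻¹)) :
      |μ / 2 - (τ + τ⁻¹) - e| < |y - e| := by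
    have : μ / 2 - 2 ≤ y := not_lt.1 fun h => hne (eq_of_Ppoly_eq_zero_of_lt h hy huniq)
    exact hclose.trans_le (by linarith [le_abs_self (y - e)])
  refine ⟨(Ppoly_param_eq_zero_iff μ hτ n).2 hτ₀, fun y hy => ?_, fun y hy hle => ?_⟩
  · by_cases hne : y = μ / 2 - (τ + τ⁻¹)
    · rw [hne]
    · exact (hfar y hy hne).le
  · by_contra hne
    exact (hfar y hy hne).not_ge hle

theorem tendsto_abs_param_secularRoot_sub_rpow {μ : ℝ} (hμ : 1 < μ) :
    Tendsto (fun n : ℕ => |μ / 2 - (secularRoot μ n + (secularRoot μ n)⁻¹) - (-μ / 2 - 1 / μ)| ^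
      (1 / (n : ℝ))) atTop (𝓝 (1 / μ ^ 2)) := by
  have hμ₀ : 0 < μ := by linarith
  have hμ₁ : 0 < μ * μ - 1 := by nlinarith
  have hτ := tendsto_secularRoot hμ
  have h := tendsto_mul_pow_succ_rpow_one_div (a := fun n => (μ * secularRoot μ n - 1) ^ 2 / μ)
    (b := fun n => (secularRoot μ n)⁻¹ ^ 2) ((((hτ.const_mul μ).sub_const 1).pow 2).div_const μ)
    (by positivity) ((hτ.inv₀ hμ₀.ne').pow 2) (fun n => by positivity) (fun n => by positivity)
  rw [inv_pow, ← one_div] at h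
  refine h.congr' ?_
  filter_upwards [eventually_secularRoot_spec (μ := μ) (c := (1 + μ) / 2) (by linarith)
    (by linarith)] with n hn
  obtain ⟨hcτ, -, hτ₀, -⟩ := hn
  rw [param_sub_eigenvalue_of_secular_eq_zero hμ₀ (by linarith) hτ₀, abs_of_nonneg (by positivity)]

theorem extreme_zero_asymptotics (μ : ℝ) (hμ : 1 < μ) :
    ∃ N : ℕ, ∃ x : ℕ → ℝ,
      (∀ n, N ≤ n →
        (Ppoly μ n (x n) = 0 ∧
          (∀ y : ℝ, Ppoly μ n y = 0 →
            |x n - (-μ / 2 - 1 / μ)| ≤ |y - (-μ / 2 - 1 / μ)|) ∧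
          (∀ y : ℝ, Ppoly μ n y = 0 →
            |y - (-μ / 2 - 1 / μ)| ≤ |x n - (-μ / 2 - 1 / μ)| → y = x n))) ∧
      Tendsto (fun n : ℕ => |x n - (-μ / 2 - 1 / μ)| ^ (1 / (n : ℝ)))
        atTop (𝓝 (1 / μ ^ 2)) := by
  have hμ₀ : 0 < μ := by linarith
  set τ := secularRoot μ
  have hgap : 0 < μ / 2 - 2 - (-μ / 2 - 1 / μ) := by
    have hμ₁ : 0 < μ - 1 := by linarith
    rw [show μ / 2 - 2 - (-μ / 2 - 1 / μ) = (μ - 1) ^ 2 / μ by field_simp; ring]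
    positivity
  have hτ : Tendsto τ atTop (𝓝 μ) := tendsto_secularRoot hμ
  have hdist : Tendsto (fun n => |μ / 2 - (τ n + (τ n)⁻¹) - (-μ / 2 - 1 / μ)|) atTop (𝓝 0) := by
    convert (((hτ.add (hτ.inv₀ hμ₀.ne')).const_sub (μ / 2)).sub_const (-μ / 2 - 1 / μ)).abs
      using 2
    rw [show μ / 2 - (μ + μ⁻¹) - (-μ / 2 - 1 / μ) = 0 by ring, abs_zero]
  obtain ⟨N, hN⟩ := eventually_atTop.1 ((eventually_secularRoot_spec (μ := μ)
    (c := (1 + μ) / 2) (by linarith) (by linarith)).and (hdist.eventually (gt_mem_nhds hgap)))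
  refine ⟨N, fun n => μ / 2 - (τ n + (τ n)⁻¹), fun n hn => ?_,
    tendsto_abs_param_secularRoot_sub_rpow hμ⟩
  obtain ⟨⟨hcτ, -, hτ₀, huniq⟩, hclose⟩ := hN n hn
  exact Ppoly_param_closest_zero (by linarith) hτ₀ huniq hclose
end
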